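/- arXiv:2509.09039 — 3 statements merged into one kernel-verified Lean document; each statement's English description precedes it below -/
import Mathlib

section
/- Fix integers u ≥ 2 and 1 ≤ s ≤ u−1. For m ∈ ℕ let h^{(m)}_c = m+1 if c < s and h^{(m)}_c = m otherwise (for 0 ≤ c ≤ u−1), let D(m,k) = Σ_{c=0}^{u−1−k} h^{(m)}_c · h^{(m)}_{c+k} for 1 ≤ k ≤ u−1, and set δ(m,k) = D(m+1,k) − D(m,k). Then for all m ∈ ℕ and 1 ≤ k ≤ u−1, δ(m,k) + δ(m,u−k) = 2(mu+s) + u. -/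
/-- Column heights of the left-adjusted pyramid of the partition `[u^m, s]`. -/
def pyrH (s m c : ℕ) : ℕ := if c < s then m + 1 else m

/-- `pyrD u s m k = dim g_k = Σ_{c=0}^{u-1-k} h_c · h_{c+k}` for `1 ≤ k ≤ u-1`. -/
def pyrD (u s m k : ℕ) : ℕ := ∑ c ∈ Finset.range (u - k), pyrH s m c * pyrH s m (c + k)

/-- `pyrδ u s m k = D(m+1,k) - D(m,k)`. -/
def pyrδ (u s m k : ℕ) : ℤ := (pyrD u s (m + 1) k : ℤ) - (pyrD u s m k : ℤ)


/-!
Raising `m` by one adds a box to every column, and `(a + 1) (b + 1) - a b = a + b + 1`, so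
`δ(m,k)` is `u - k` plus the sum of the heights of the first `u - k` columns plus that of the
last `u - k` columns. In `δ(m,k) + δ(m,u-k)` these four partial sums pair up into two copies
of the total number of boxes `mu + s`, and the constants add up to `u`.
-/

open Finset

lemma pyrH_succ (s m c : ℕ) : pyrH s (m + 1) c = pyrH s m c + 1 := by
  unfold pyrH
  split_ifs <;> rfl

lemma sum_range_pyrH (s m n : ℕ) : ∑ c ∈ range n, pyrH s m c = n * m + min s n := by
  induction n with
  | zero => simp
  | succ n ih =>
    rw [sum_range_succ, ih]
    unfold pyrH
    split_ifs <;> grind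

lemma pyrD_succ (u s m k : ℕ) :
    pyrD u s (m + 1) k =
      pyrD u s m k + ∑ c ∈ range (u - k), (pyrH s m c + pyrH s m (c + k) + 1) := by
  simp only [pyrD, pyrH_succ, ← sum_add_distrib]
  exact sum_congr rfl fun _ _ => by ring

lemma pyrδ_eq (u s m k : ℕ) :
    pyrδ u s m k =
      ((u - k + ∑ c ∈ range (u - k), pyrH s m c + ∑ c ∈ Ico k u, pyrH s m c : ℕ) : ℤ) := by
  rw [pyrδ, pyrD_succ, sum_Ico_eq_sum_range, sum_add_distrib, sum_add_distrib]
  push_cast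
  simp only [add_comm k, sum_const, card_range]
  ring

theorem delta_sum_general (u s : ℕ) (hs2 : s ≤ u - 1)
    (m k : ℕ) (hk2 : k ≤ u - 1) :
    pyrδ u s m k + pyrδ u s m (u - k) = 2 * ((m : ℤ) * u + s) + u := by
  have hku : k ≤ u := by omega
  have htotal : ∑ c ∈ range u, pyrH s m c = m * u + s := by
    rw [sum_range_pyrH, min_eq_left (by omega), mul_comm]
  have hfront := sum_range_add_sum_Ico (pyrH s m) hku
  have hback := sum_range_add_sum_Ico (pyrH s m) (Nat.sub_le u k)
  rw [pyrδ_eq, pyrδ_eq, Nat.sub_sub_self hku, ← Nat.cast_add]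
  have hnat : u - k + ∑ c ∈ range (u - k), pyrH s m c + ∑ c ∈ Ico k u, pyrH s m c
      + (k + ∑ c ∈ range k, pyrH s m c + ∑ c ∈ Ico (u - k) u, pyrH s m c)
      = 2 * (m * u + s) + u := by
    omega
  rw [hnat]
  push_cast
  ring

/-- `δ(m,k) + δ(m,u-k) = 2(mu+s) + u`. -/
theorem delta_sum (u s : ℕ) (hu : 2 ≤ u) (hs1 : 1 ≤ s) (hs2 : s ≤ u - 1)
    (m k : ℕ) (hk1 : 1 ≤ k) (hk2 : k ≤ u - 1) :
    pyrδ u s m k + pyrδ u s m (u - k) = 2 * ((m : ℤ) * u + s) + u :=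
  delta_sum_general u s hs2 m k hk2
end

section
/- Fix integers u ≥ 2, 1 ≤ s ≤ u−1, and a nondecreasing function a : Fin u → ℤ with 1 ≤ a_j ≤ s for all j. For m ∈ ℕ set n = mu + s, b_j = m·j + a_j, F(i,j) = min(i,j) − ij/n ∈ ℚ (for 0 ≤ i,j ≤ n), and define N_m(a) = (u/(2n))·Σ_{i=1}^{n−1} Σ_{j=1}^{n−1} F(i,j) − Σ_{i=1}^{n−1} Σ_{j=0}^{u−1} F(i, b_j) + (n/(2u))·Σ_{j=0}^{u−1} Σ_{k=0}^{u−1} F(b_j, b_k) − n²/(24u). Then N_m(a) is independent of m: N_m(a) = N_0(a) for all m ∈ ℕ. -/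
/-! Every Gram sum in `N_m(a)` has a closed form: `Σ_{i=1}^{n-1} F(i,c) = c(n-c)/2` for `c ≤ n`,
hence `Σ_{i,j} F(i,j) = n(n²-1)/12`, and because `b` is nondecreasing,
`Σ_{j,k} min(b_j,b_k) = Σ_j (2u-2j-1) b_j`. What remains is a polynomial in `m`, `s` and the
moments `Σ a_j`, `Σ a_j²`, `Σ j a_j`; substituting `Σ j` and `Σ j²`, every power of `m` cancels. -/

/-- The quantity `N_m(a) = (u/2n)|ρ - (n/u)η|² - n²/(24u)` of Proposition 4.25, written via the
Gram matrix `F(i,j) = min(i,j) - ij/n` of the fundamental weights of `sl_n` (with `ϖ_0 = ϖ_n = 0`),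
where `n = mu + s`, `η = Σ_{j<u} ϖ_{b_j}` and `b_j = m·j + a_j`.  Explicitly,
`N_m(a) = (u/2n)·Σ_{i,j=1}^{n-1} F(i,j) - Σ_{i=1}^{n-1} Σ_{j<u} F(i,b_j)
  + (n/2u)·Σ_{j,k<u} F(b_j,b_k) - n²/(24u)`. -/
noncomputable def Nval (u s : ℕ) (a : Fin u → ℤ) (m : ℕ) : ℚ :=
  (u : ℚ) / (2 * ((m * u + s : ℕ) : ℚ)) *
      ∑ i ∈ Finset.Ico 1 (m * u + s), ∑ j ∈ Finset.Ico 1 (m * u + s),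
        (min (i : ℚ) (j : ℚ) - (i : ℚ) * (j : ℚ) / ((m * u + s : ℕ) : ℚ))
    - ∑ i ∈ Finset.Ico 1 (m * u + s), ∑ j : Fin u,
        (min (i : ℚ) ((m : ℚ) * ((j : ℕ) : ℚ) + ((a j : ℤ) : ℚ))
          - (i : ℚ) * ((m : ℚ) * ((j : ℕ) : ℚ) + ((a j : ℤ) : ℚ)) / ((m * u + s : ℕ) : ℚ))
    + ((m * u + s : ℕ) : ℚ) / (2 * (u : ℚ)) *
        ∑ j : Fin u, ∑ k : Fin u,
          (min ((m : ℚ) * ((j : ℕ) : ℚ) + ((a j : ℤ) : ℚ))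
              ((m : ℚ) * ((k : ℕ) : ℚ) + ((a k : ℤ) : ℚ))
            - ((m : ℚ) * ((j : ℕ) : ℚ) + ((a j : ℤ) : ℚ))
              * ((m : ℚ) * ((k : ℕ) : ℚ) + ((a k : ℤ) : ℚ)) / ((m * u + s : ℕ) : ℚ))
    - ((m * u + s : ℕ) : ℚ) ^ 2 / (24 * (u : ℚ))

section

open Finset

lemma sum_range_cast_id (n : ℕ) : ∑ i ∈ range n, (i : ℚ) = n * (n - 1) / 2 := by
  induction n with
  | zero => simp
  | succ n ih => rw [sum_range_succ, ih]; push_cast; ring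

lemma sum_range_cast_sq (n : ℕ) : ∑ i ∈ range n, (i : ℚ) ^ 2 = n * (n - 1) * (2 * n - 1) / 6 := by
  induction n with
  | zero => simp
  | succ n ih => rw [sum_range_succ, ih]; push_cast; ring

lemma sum_fin_cast_id (u : ℕ) : ∑ j : Fin u, (j : ℚ) = u * (u - 1) / 2 := by
  rw [Fin.sum_univ_eq_sum_range (fun j => (j : ℚ)), sum_range_cast_id]

lemma sum_fin_cast_sq (u : ℕ) : ∑ j : Fin u, (j : ℚ) ^ 2 = u * (u - 1) * (2 * u - 1) / 6 := by
  rw [Fin.sum_univ_eq_sum_range (fun j => (j : ℚ) ^ 2), sum_range_cast_sq]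

lemma sum_Ico_one_eq_sum_range {M : Type*} [AddCommMonoid M] (f : ℕ → M) (h : f 0 = 0) (n : ℕ) :
    ∑ i ∈ Ico 1 n, f i = ∑ i ∈ range n, f i := by
  rcases Nat.eq_zero_or_pos n with rfl | hn
  · simp
  · rw [sum_range_eq_add_Ico f hn, h, zero_add]

lemma sum_sum_comp_min {R : Type*} [CommRing R] {u : ℕ} (g : Fin u → R) :
    ∑ j, ∑ k, g (min j k) = ∑ j : Fin u, (2 * u - 2 * j - 1 : R) * g j := by
  induction u with
  | zero => simp
  | succ u ih =>
    have hsucc (j k : Fin u) : min j.succ k.succ = (min j k).succ :=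
      (Fin.strictMono_succ.monotone.map_min).symm
    simp only [Fin.sum_univ_succ, Fin.zero_le, min_eq_left, min_eq_right, hsucc, sum_add_distrib,
      sum_const, card_univ, Fintype.card_fin, nsmul_eq_mul, Fin.val_succ, Fin.val_zero]
    rw [ih (fun j => g j.succ)]
    push_cast
    ring_nf

lemma sum_sum_min_of_monotone {R : Type*} [CommRing R] [LinearOrder R] {u : ℕ} {β : Fin u → R}
    (hβ : Monotone β) :
    ∑ j, ∑ k, min (β j) (β k) = ∑ j : Fin u, (2 * u - 2 * j - 1 : R) * β j := by
  simp_rw [← hβ.map_min]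
  exact sum_sum_comp_min β

def gram (n : ℕ) (x y : ℚ) : ℚ := min x y - x * y / n

lemma gram_comm (n : ℕ) (x y : ℚ) : gram n x y = gram n y x := by
  simp only [gram, min_comm, mul_comm]

lemma gram_zero_left (n : ℕ) {y : ℚ} (hy : 0 ≤ y) : gram n 0 y = 0 := by
  simp [gram, hy]

lemma sum_range_min_cast {n c : ℕ} (hc : c ≤ n) :
    ∑ i ∈ range n, min (i : ℚ) c = c * (c - 1) / 2 + (n - c) * c := by
  rw [← sum_range_add_sum_Ico _ hc]
  have hlow : ∀ i ∈ range c, min (i : ℚ) c = i := fun i hi =>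
    min_eq_left (by exact_mod_cast (mem_range.mp hi).le)
  have hhigh : ∀ i ∈ Ico c n, min (i : ℚ) c = c := fun i hi =>
    min_eq_right (by exact_mod_cast (mem_Ico.mp hi).1)
  rw [sum_congr rfl hlow, sum_congr rfl hhigh, sum_range_cast_id, sum_const, Nat.card_Ico,
    nsmul_eq_mul, Nat.cast_sub hc]

lemma sum_gram_right {n c : ℕ} (hc : c ≤ n) :
    ∑ i ∈ Ico 1 n, gram n i c = c * (n - c) / 2 := by
  rcases eq_or_ne n 0 with rfl | hn
  · simp [Nat.le_zero.mp hc]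
  rw [sum_Ico_one_eq_sum_range (fun i => gram n i c) (gram_zero_left n c.cast_nonneg)]
  simp only [gram]
  rw [sum_sub_distrib, sum_range_min_cast hc, ← sum_div, ← sum_mul, sum_range_cast_id]
  field_simp
  ring

lemma sum_sum_gram (n : ℕ) :
    ∑ i ∈ Ico 1 n, ∑ j ∈ Ico 1 n, gram n i j = n * (n ^ 2 - 1) / 12 := by
  have hrow : ∀ i ∈ Ico 1 n, ∑ j ∈ Ico 1 n, gram n i j = i * (n - i) / 2 := fun i hi => by
    simp_rw [gram_comm n i]
    exact sum_gram_right (mem_Ico.mp hi).2.le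
  rw [sum_congr rfl hrow, sum_Ico_one_eq_sum_range (fun i : ℕ => (i : ℚ) * (n - i) / 2) (by simp)]
  simp only [mul_sub, sub_div, sum_sub_distrib, ← sum_div, ← sum_mul, ← sq, sum_range_cast_id,
    sum_range_cast_sq]
  ring

lemma sum_sum_gram_of_monotone (n : ℕ) {u : ℕ} {b : Fin u → ℚ} (hb : Monotone b) :
    ∑ j, ∑ k, gram n (b j) (b k)
      = ∑ j : Fin u, (2 * u - 2 * j - 1 : ℚ) * b j - (∑ j, b j) ^ 2 / n := by
  simp only [gram, sum_sub_distrib, sum_sum_min_of_monotone hb, sq, sum_mul_sum, sum_div]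

def Nform (n u : ℕ) (b : Fin u → ℚ) : ℚ :=
  u / (2 * n) * ∑ i ∈ Ico 1 n, ∑ j ∈ Ico 1 n, gram n i j
    - ∑ i ∈ Ico 1 n, ∑ j, gram n i (b j)
    + n / (2 * u) * ∑ j, ∑ k, gram n (b j) (b k)
    - n ^ 2 / (24 * u)

lemma Nval_eq_Nform (u s : ℕ) (a : Fin u → ℤ) (m : ℕ) :
    Nval u s a m = Nform (m * u + s) u (fun j => m * j + a j) := rfl

def reducedN (n u : ℕ) (b : Fin u → ℚ) : ℚ :=
  u * (n ^ 2 - 1) / 24 - n ^ 2 / (24 * u) - ∑ j, b j * (n - b j) / 2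
    + n / (2 * u) * ∑ j : Fin u, (2 * u - 2 * j - 1 : ℚ) * b j - (∑ j, b j) ^ 2 / (2 * u)

lemma Nform_eq_reducedN {n u : ℕ} (hn : n ≠ 0) {c : Fin u → ℕ} (hc : Monotone c)
    (hcn : ∀ j, c j ≤ n) : Nform n u (fun j => c j) = reducedN n u (fun j => c j) := by
  have hcol : ∑ i ∈ Ico 1 n, ∑ j, gram n i (c j) = ∑ j, (c j : ℚ) * (n - c j) / 2 := by
    rw [sum_comm]
    exact sum_congr rfl fun j _ => sum_gram_right (hcn j)
  rw [Nform, reducedN, sum_sum_gram, hcol,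
    sum_sum_gram_of_monotone n (b := fun j => (c j : ℚ)) (Nat.mono_cast.comp hc)]
  have hn' : (n : ℚ) ≠ 0 := Nat.cast_ne_zero.mpr hn
  have hfirst : (u : ℚ) / (2 * n) * (n * (n ^ 2 - 1) / 12) = u * (n ^ 2 - 1) / 24 := by
    field_simp; ring
  have hlast :
      (n : ℚ) / (2 * u) * ((∑ j, (c j : ℚ)) ^ 2 / n) = (∑ j, (c j : ℚ)) ^ 2 / (2 * u) := by
    rw [div_mul_div_comm, mul_comm (n : ℚ), mul_div_mul_right _ _ hn']
  rw [hfirst, mul_sub ((n : ℚ) / (2 * u)), hlast]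
  ring

lemma reducedN_eq_moments (n u : ℕ) (b : Fin u → ℚ) :
    reducedN n u b = u * (n ^ 2 - 1) / 24 - n ^ 2 / (24 * u)
      - (n * ∑ j, b j - ∑ j, b j ^ 2) / 2
      + n / (2 * u) * ((2 * u - 1) * ∑ j, b j - 2 * ∑ j : Fin u, (j : ℚ) * b j)
      - (∑ j, b j) ^ 2 / (2 * u) := by
  have hquad : ∑ j, b j * (n - b j) / 2 = (n * ∑ j, b j - ∑ j, b j ^ 2) / 2 := by
    rw [← sum_div, mul_sum, ← sum_sub_distrib]
    exact congrArg (· / 2) (sum_congr rfl fun j _ => by ring)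
  have hlin : ∑ j : Fin u, (2 * u - 2 * j - 1 : ℚ) * b j
      = (2 * u - 1) * ∑ j, b j - 2 * ∑ j : Fin u, (j : ℚ) * b j := by
    rw [mul_sum, mul_sum, ← sum_sub_distrib]
    exact sum_congr rfl fun j _ => by ring
  rw [reducedN, hquad, hlin]

lemma reducedN_shift {u : ℕ} (hu : u ≠ 0) (m s : ℕ) (a : Fin u → ℚ) :
    reducedN (m * u + s) u (fun j => m * j + a j) = reducedN s u a := by
  have hu' : (u : ℚ) ≠ 0 := Nat.cast_ne_zero.mpr hu
  have hsum : ∑ j : Fin u, (m * j + a j : ℚ) = m * (u * (u - 1) / 2) + ∑ j, a j := by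
    rw [sum_add_distrib, ← mul_sum, sum_fin_cast_id]
  have hsq : ∑ j : Fin u, (m * j + a j : ℚ) ^ 2
      = m ^ 2 * (u * (u - 1) * (2 * u - 1) / 6) + 2 * m * ∑ j : Fin u, (j : ℚ) * a j
        + ∑ j, a j ^ 2 := by
    simp only [add_sq, sum_add_distrib, mul_pow, ← mul_sum, sum_fin_cast_sq, mul_assoc]
  have hmom : ∑ j : Fin u, (j : ℚ) * (m * j + a j)
      = m * (u * (u - 1) * (2 * u - 1) / 6) + ∑ j : Fin u, (j : ℚ) * a j := by
    simp only [mul_add, sum_add_distrib, mul_left_comm _ (m : ℚ), ← mul_sum, ← sq, sum_fin_cast_sq]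
  rw [reducedN_eq_moments, reducedN_eq_moments, hsum, hsq, hmom]
  push_cast
  field_simp
  ring

lemma Nval_eq_reducedN {u s : ℕ} (hs : 1 ≤ s) {a : Fin u → ℤ} (hmono : Monotone a)
    (ha : ∀ j, 1 ≤ a j ∧ a j ≤ s) (m : ℕ) :
    Nval u s a m = reducedN (m * u + s) u (fun j => m * j + a j) := by
  lift a to Fin u → ℕ using fun j => zero_le_one.trans (ha j).1
  beta_reduce at ha
  have hc : Monotone fun j : Fin u => m * (j : ℕ) + a j := fun j k hjk =>
    Nat.add_le_add (Nat.mul_le_mul_left m hjk) (Int.ofNat_le.mp (hmono hjk))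
  have hcn (j : Fin u) : m * (j : ℕ) + a j ≤ m * u + s := by
    have := (ha j).2
    have := Nat.mul_le_mul_left m j.isLt.le
    omega
  have := Nform_eq_reducedN (by omega) hc hcn
  push_cast at this
  exact (Nval_eq_Nform u s _ m).trans this

end

theorem Nval_independent_of_m_general (u s : ℕ) (hu : 2 ≤ u) (hs1 : 1 ≤ s)
    (a : Fin u → ℤ) (hmono : Monotone a) (ha : ∀ j, 1 ≤ a j ∧ a j ≤ (s : ℤ)) (m : ℕ) :
    Nval u s a m = Nval u s a 0 := by
  rw [Nval_eq_reducedN hs1 hmono ha, Nval_eq_reducedN hs1 hmono ha, reducedN_shift (by omega),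
    reducedN_shift (by omega)]

/-- Proposition 4.25: `N_m(a)` is independent of `m`. -/
theorem Nval_independent_of_m (u s : ℕ) (hu : 2 ≤ u) (hs1 : 1 ≤ s) (hs2 : s ≤ u - 1)
    (a : Fin u → ℤ) (hmono : Monotone a) (ha : ∀ j, 1 ≤ a j ∧ a j ≤ (s : ℤ)) (m : ℕ) :
    Nval u s a m = Nval u s a 0 :=
  Nval_independent_of_m_general u s hu hs1 a hmono ha m
end

section
/- Fix integers u ≥ 2, 1 ≤ s ≤ u−1, m ≥ 1. Let P = {(c,k) : 0 ≤ c < u, 0 ≤ k < h_c} where h_c = m+1 if c < s and h_c = m otherwise, and let g₀ be the complex Lie algebra of trace-zero P × P matrices A with A_{pq} = 0 unless p and q have the same first coordinate. Let x, y ∈ g₀ be diagonal matrices supported on the short row {(c, m) : 0 ≤ c < s}: x_{(c,m)} = ξ_c and y_{(c,m)} = η_c for c < s with Σ_{c<s} ξ_c = Σ_{c<s} η_c = 0, and all other entries zero. Then the Killing form of g₀ satisfies κ_{g₀}(x, y) = 2m·Σ_{c<s} ξ_c η_c, where κ_{g₀}(x,y) is the trace on g₀ of (ad x)∘(ad y).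 -/
attribute [local instance 100] LieRing.ofAssociativeRing

/-- The boxes of the left-adjusted pyramid of the partition `[u^m, s]`: pairs `(c, k)` with
column `c < u` and row `k < h_c`, where `h_c = m+1` if `c < s` and `h_c = m` otherwise. -/
abbrev PyrIdx (u s m : ℕ) :=
  {p : Fin u × Fin (m + 1) // (p.2 : ℕ) < if (p.1 : ℕ) < s then m + 1 else m}

/-- The degree-zero subalgebra `g₀` of `sl_n(ℂ)` (`n = mu + s`) for the good grading attached
to the left-adjusted pyramid of `[u^m, s]`: trace-zero matrices indexed by the boxes of the
pyramid which vanish off the column-diagonal blocks. -/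
def g0 (u s m : ℕ) : LieSubalgebra ℂ (Matrix (PyrIdx u s m) (PyrIdx u s m) ℂ) where
  carrier := {A | Matrix.trace A = 0 ∧ ∀ p q : PyrIdx u s m, p.1.1 ≠ q.1.1 → A p q = 0}
  add_mem' := fun {A B} ha hb =>
    ⟨by simp [Matrix.trace_add, ha.1, hb.1],
      fun p q h => by simp [Matrix.add_apply, ha.2 p q h, hb.2 p q h]⟩
  zero_mem' := ⟨by simp, fun p q h => by simp⟩
  smul_mem' := fun c {A} ha =>
    ⟨by simp [Matrix.trace_smul, ha.1], fun p q h => by simp [Matrix.smul_apply, ha.2 p q h]⟩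
  lie_mem' := fun {A B} ha hb => by
    refine ⟨?_, fun p q h => ?_⟩
    · rw [Ring.lie_def, Matrix.trace_sub, Matrix.trace_mul_comm, sub_self]
    · rw [Ring.lie_def]
      simp only [Matrix.sub_apply, Matrix.mul_apply]
      have h1 : (∑ r : PyrIdx u s m, A p r * B r q) = 0 :=
        Finset.sum_eq_zero fun r _ => by
          by_cases hpr : p.1.1 = r.1.1
          · rw [hb.2 r q fun hrq => h (hpr.trans hrq), mul_zero]
          · rw [ha.2 p r hpr, zero_mul]
      have h2 : (∑ r : PyrIdx u s m, B p r * A r q) = 0 :=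
        Finset.sum_eq_zero fun r _ => by
          by_cases hpr : p.1.1 = r.1.1
          · rw [ha.2 r q fun hrq => h (hpr.trans hrq), mul_zero]
          · rw [hb.2 p r hpr, zero_mul]
      rw [h1, h2, sub_zero]

/-!
Since `x` and `y` are diagonal, `ad x ∘ ad y` multiplies the `(p, q)` entry of an element of
`g₀` by `(x_p - x_q)(y_p - y_q)`. Extended to all matrices as a Hadamard product whose
coefficients vanish on the diagonal and off the column blocks, this operator maps every matrix
into `g₀`, so its trace on `g₀` is its trace on the full matrix space: the sum of the
coefficients. In a column `c < s` the only nonzero coefficients pair the box `(c, m)` with one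
of the `m` other boxes of the column, each contributing `ξ_c η_c`, and this happens in both
orders.
-/

open Matrix Finset

theorem LinearMap.trace_eq_sum_of_apply_basis {R M ι : Type*} [CommRing R] [AddCommGroup M]
    [Module R M] [Fintype ι] [DecidableEq ι] (b : Module.Basis ι R M) (f : M →ₗ[R] M)
    (c : ι → R) (hf : ∀ i, f (b i) = c i • b i) : LinearMap.trace R M f = ∑ i, c i := by
  rw [LinearMap.trace_eq_matrix_trace R b, Matrix.trace]
  refine Fintype.sum_congr _ _ fun i => ?_
  simp [LinearMap.toMatrix_apply, hf]

theorem Finset.sum_sum_sub_mul_sub {ι R : Type*} [CommRing R] (s : Finset ι) (f g : ι → R) :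
    ∑ i ∈ s, ∑ j ∈ s, (f i - f j) * (g i - g j)
      = 2 * (#s * ∑ i ∈ s, f i * g i - (∑ i ∈ s, f i) * ∑ i ∈ s, g i) := by
  simp only [sub_mul, mul_sub, sum_sub_distrib, sum_const, nsmul_eq_mul, ← mul_sum, ← sum_mul]
  ring

namespace Matrix

variable {m n R : Type*} [CommRing R]

theorem lie_diagonal_apply [Fintype n] [DecidableEq n] (d : n → R) (A : Matrix n n R) (i j : n) :
    ⁅diagonal d, A⁆ i j = (d i - d j) * A i j := by
  rw [Ring.lie_def, sub_apply, diagonal_mul, mul_diagonal]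
  ring

variable (R) in
def hadamardLeft (L : Matrix m n R) : Matrix m n R →ₗ[R] Matrix m n R where
  toFun := (L ⊙ ·)
  map_add' B C := hadamard_add L B C
  map_smul' c A := hadamard_smul L A c

@[simp]
theorem hadamardLeft_apply (L A : Matrix m n R) : hadamardLeft R L A = L ⊙ A := rfl

theorem trace_hadamardLeft [Fintype m] [Fintype n] [DecidableEq m] [DecidableEq n]
    (L : Matrix m n R) : LinearMap.trace R _ (hadamardLeft R L) = ∑ i, ∑ j, L i j := by
  rw [LinearMap.trace_eq_sum_of_apply_basis (stdBasis R m n) _ (fun ij => L ij.1 ij.2),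
    Fintype.sum_prod_type]
  rintro ⟨i, j⟩
  ext k l
  by_cases h : i = k ∧ j = l
  · obtain ⟨rfl, rfl⟩ := h
    simp [stdBasis_eq_single]
  · simp [stdBasis_eq_single, single, h]

end Matrix

section Pyramid

variable {u s m : ℕ}

def columnRows (s m c : ℕ) : Finset (Fin (m + 1)) :=
  univ.filter fun k => (k : ℕ) < if c < s then m + 1 else m

theorem sum_pyrIdx {M : Type*} [AddCommMonoid M] (f : Fin u × Fin (m + 1) → M) :
    ∑ p : PyrIdx u s m, f p.1 = ∑ c : Fin u, ∑ k ∈ columnRows s m c, f (c, k) := by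
  rw [← sum_subtype _ (fun _ => mem_filter_univ _) f, sum_filter, Fintype.sum_prod_type]
  simp only [columnRows, sum_filter]

theorem sum_sum_pyrIdx_sameColumn {M : Type*} [AddCommMonoid M]
    (F : Fin u × Fin (m + 1) → Fin u × Fin (m + 1) → M) :
    ∑ p : PyrIdx u s m, ∑ q : PyrIdx u s m, (if p.1.1 = q.1.1 then F p.1 q.1 else 0)
      = ∑ c : Fin u, ∑ k ∈ columnRows s m c, ∑ k' ∈ columnRows s m c,
          F (c, k) (c, k') := by
  calc _ = ∑ p : PyrIdx u s m, ∑ k' ∈ columnRows s m p.1.1, F p.1 (p.1.1, k') := by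
        refine sum_congr rfl fun p _ => ?_
        rw [sum_pyrIdx fun b => if p.1.1 = b.1 then F p.1 b else 0,
          Fintype.sum_eq_single p.1.1 fun c hc => sum_eq_zero fun k _ => if_neg (Ne.symm hc)]
        simp only [if_true]
    _ = _ := sum_pyrIdx fun a => ∑ k' ∈ columnRows s m a.1, F a (a.1, k')

def adDiagCoeff (d e : PyrIdx u s m → ℂ) : Matrix (PyrIdx u s m) (PyrIdx u s m) ℂ :=
  of fun p q => if p.1.1 = q.1.1 then (d p - d q) * (e p - e q) else 0

theorem hadamard_mem_g0 {L : Matrix (PyrIdx u s m) (PyrIdx u s m) ℂ} (hdiag : ∀ p, L p p = 0)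
    (hoff : ∀ p q, p.1.1 ≠ q.1.1 → L p q = 0) (A : Matrix (PyrIdx u s m) (PyrIdx u s m) ℂ) :
    L ⊙ A ∈ g0 u s m :=
  ⟨by simp [trace, hadamard_apply, hdiag],
    fun p q h => by rw [hadamard_apply, hoff p q h, zero_mul]⟩

theorem adDiagCoeff_hadamard_mem_g0 (d e : PyrIdx u s m → ℂ)
    (A : Matrix (PyrIdx u s m) (PyrIdx u s m) ℂ) : adDiagCoeff d e ⊙ A ∈ g0 u s m :=
  hadamard_mem_g0 (fun p => by simp) (fun p q h => if_neg h) A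

theorem lie_diagonal_lie_diagonal_of_mem_g0 (d e : PyrIdx u s m → ℂ)
    {A : Matrix (PyrIdx u s m) (PyrIdx u s m) ℂ} (hA : A ∈ g0 u s m) :
    ⁅diagonal d, ⁅diagonal e, A⁆⁆ = adDiagCoeff d e ⊙ A := by
  ext p q
  rw [lie_diagonal_apply, lie_diagonal_apply, hadamard_apply, adDiagCoeff, of_apply]
  split_ifs with h
  · ring
  · rw [hA.2 p q h, mul_zero, mul_zero, zero_mul]

theorem killingForm_g0_of_eq_diagonal {x y : g0 u s m} {d e : PyrIdx u s m → ℂ}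
    (hx : (x : Matrix (PyrIdx u s m) (PyrIdx u s m) ℂ) = diagonal d)
    (hy : (y : Matrix (PyrIdx u s m) (PyrIdx u s m) ℂ) = diagonal e) :
    killingForm ℂ (g0 u s m) x y = ∑ p, ∑ q, adDiagCoeff d e p q := by
  have hmaps : ∀ A ∈ (g0 u s m).toSubmodule,
      hadamardLeft ℂ (adDiagCoeff d e) A ∈ (g0 u s m).toSubmodule :=
    fun A _ => adDiagCoeff_hadamard_mem_g0 d e A
  have hadComp : LieAlgebra.ad ℂ (g0 u s m) x ∘ₗ LieAlgebra.ad ℂ (g0 u s m) y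
      = (hadamardLeft ℂ (adDiagCoeff d e)).restrict hmaps := by
    ext z : 2
    simp only [LinearMap.comp_apply, LieAlgebra.ad_apply, LieSubalgebra.coe_bracket, hx, hy]
    exact lie_diagonal_lie_diagonal_of_mem_g0 d e z.2
  rw [killingForm_apply_apply, hadComp, ← trace_hadamardLeft]
  exact LinearMap.trace_restrict_eq_of_forall_mem _ _ (adDiagCoeff_hadamard_mem_g0 d e) hmaps

def shortRow (ξ : Fin u → ℂ) (a : Fin u × Fin (m + 1)) : ℂ :=
  if (a.2 : ℕ) = m then ξ a.1 else 0

theorem sum_sum_columnRows_shortRow (ξ η : Fin u → ℂ) (c : Fin u) :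
    ∑ k ∈ columnRows s m c, ∑ k' ∈ columnRows s m c,
      (shortRow ξ (c, k) - shortRow ξ (c, k')) * (shortRow η (c, k) - shortRow η (c, k'))
      = if (c : ℕ) < s then 2 * m * (ξ c * η c) else 0 := by
  split_ifs with hc
  · have hfull : columnRows s m c = univ := by
      ext k
      simpa [columnRows, hc] using Fin.is_le k
    have hlast (k : Fin (m + 1)) : (k : ℕ) = m ↔ k = Fin.last m := by simp [Fin.ext_iff]
    rw [hfull, sum_sum_sub_mul_sub]
    simp only [card_univ, Fintype.card_fin, Nat.cast_add, Nat.cast_one, shortRow, hlast, mul_ite,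
      ite_mul, zero_mul, mul_zero, sum_ite_eq', mem_univ, ↓reduceIte]
    ring
  · have hlow : ∀ k ∈ columnRows s m c, (k : ℕ) ≠ m := by
      simpa [columnRows, hc] using fun k => Nat.ne_of_lt
    refine sum_eq_zero fun k hk => sum_eq_zero fun k' hk' => ?_
    simp [shortRow, hlow k hk, hlow k' hk']

theorem sum_adDiagCoeff_shortRow (ξ η : Fin u → ℂ) :
    ∑ p, ∑ q,
        adDiagCoeff (fun p : PyrIdx u s m => shortRow ξ p.1) (fun p => shortRow η p.1) p q
      = 2 * m * ∑ c ∈ univ.filter (fun c : Fin u => (c : ℕ) < s), ξ c * η c := by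
  simp only [adDiagCoeff, of_apply]
  rw [sum_sum_pyrIdx_sameColumn
      fun a b => (shortRow ξ a - shortRow ξ b) * (shortRow η a - shortRow η b),
    sum_filter, mul_sum]
  exact sum_congr rfl fun c _ => by rw [sum_sum_columnRows_shortRow, mul_ite, mul_zero]

end Pyramid

theorem killing_form_short_row_general (u s m : ℕ) (ξ η : Fin u → ℂ)
    (x y : ↥(g0 u s m))
    (hx : (x : Matrix (PyrIdx u s m) (PyrIdx u s m) ℂ)
      = Matrix.diagonal fun p => if (p.1.2 : ℕ) = m then ξ p.1.1 else 0)
    (hy : (y : Matrix (PyrIdx u s m) (PyrIdx u s m) ℂ)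
      = Matrix.diagonal fun p => if (p.1.2 : ℕ) = m then η p.1.1 else 0) :
    killingForm ℂ ↥(g0 u s m) x y
      = 2 * (m : ℂ) * ∑ c ∈ Finset.univ.filter (fun c : Fin u => (c : ℕ) < s), ξ c * η c := by
  rw [killingForm_g0_of_eq_diagonal hx hy]
  exact sum_adDiagCoeff_shortRow ξ η

/-- Lemma 4.24 part (1): for diagonal elements `x, y` of `g₀` supported on the
short row `{(c, m) : c < s}`, with entries `ξ_c`, `η_c` summing to zero, the Killing form of
`g₀` satisfies `κ_{g₀}(x, y) = 2m·Σ_{c<s} ξ_c η_c`. -/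
theorem killing_form_short_row (u s m : ℕ) (hu : 2 ≤ u) (hs1 : 1 ≤ s) (hs2 : s ≤ u - 1)
    (hm : 1 ≤ m) (ξ η : Fin u → ℂ)
    (hξ : ∑ c ∈ Finset.univ.filter (fun c : Fin u => (c : ℕ) < s), ξ c = 0)
    (hη : ∑ c ∈ Finset.univ.filter (fun c : Fin u => (c : ℕ) < s), η c = 0)
    (x y : ↥(g0 u s m))
    (hx : (x : Matrix (PyrIdx u s m) (PyrIdx u s m) ℂ)
      = Matrix.diagonal fun p => if (p.1.2 : ℕ) = m then ξ p.1.1 else 0)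
    (hy : (y : Matrix (PyrIdx u s m) (PyrIdx u s m) ℂ)
      = Matrix.diagonal fun p => if (p.1.2 : ℕ) = m then η p.1.1 else 0) :
    killingForm ℂ ↥(g0 u s m) x y
      = 2 * (m : ℂ) * ∑ c ∈ Finset.univ.filter (fun c : Fin u => (c : ℕ) < s), ξ c * η c :=
  killing_form_short_row_general u s m ξ η x y hx hy
end
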